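/- arXiv:2107.01537 — 3 statements merged into one kernel-verified Lean document; each statement's English description precedes it below -/
import Mathlib

section
/- Let M ≥ 1 and let Σ be a symmetric positive definite M × M real matrix. Let D be the diagonal matrix whose diagonal entries are the diagonal entries of Σ, i.e., D = diagonal(Σ₁₁, …, Σ_MM). Then for every x ∈ ℝ^M, xᵀ D⁻¹ x ≤ M · (xᵀ Σ⁻¹ x); equivalently, the matrix M·Σ⁻¹ − D⁻¹ is positive semidefinite. -/
/-!
Cauchy–Schwarz for the inner product `⟪u, v⟫ = u ⬝ᵥ Σ⁻¹ *ᵥ v`, applied to `u = Σ eᵢ` and `x`,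
gives `xᵢ² = ⟪Σ eᵢ, x⟫² ≤ Σᵢᵢ · ⟪x, x⟫`. Dividing by `Σᵢᵢ > 0` and summing over the `M` indices
yields `xᵀ D⁻¹ x ≤ M · xᵀ Σ⁻¹ x`.
-/

open Matrix

namespace Matrix

variable {n : Type*} [Fintype n] [DecidableEq n]

theorem dotProduct_mulVec_mul_dotProduct_mulVec_le {R : Type*} [CommRing R] [LinearOrder R]
    [IsStrictOrderedRing R] {A : Matrix n n R} (hA : ∀ x, 0 ≤ x ⬝ᵥ A *ᵥ x) (x y : n → R) :
    (x ⬝ᵥ A *ᵥ y) * (y ⬝ᵥ A *ᵥ x) ≤ (x ⬝ᵥ A *ᵥ x) * (y ⬝ᵥ A *ᵥ y) := by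
  simpa only [toBilin'_apply'] using
    (toBilin' A).apply_mul_apply_le_of_forall_zero_le (by simpa only [toBilin'_apply']) x y

theorem inv_diagonal_of_ne_zero {K : Type*} [Field K] {d : n → K} (hd : ∀ i, d i ≠ 0) :
    (diagonal d)⁻¹ = diagonal d⁻¹ :=
  inv_eq_right_inv <| by
    rw [diagonal_mul_diagonal, ← diagonal_one]
    exact congrArg diagonal (funext fun i => mul_inv_cancel₀ (hd i))

theorem PosDef.sq_le_diag_mul_dotProduct_inv_mulVec {A : Matrix n n ℝ} (hA : A.PosDef)
    (x : n → ℝ) (i : n) : x i ^ 2 ≤ A i i * (x ⬝ᵥ A⁻¹ *ᵥ x) := by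
  let _ := hA.isUnit.invertible
  have hsymm : Aᵀ = A := hA.isHermitian
  set e : n → ℝ := Pi.single i 1
  have hxe : x ⬝ᵥ A⁻¹ *ᵥ (A *ᵥ e) = x i := by
    rw [mulVec_mulVec, inv_mul_of_invertible A, one_mulVec, dotProduct_single, mul_one]
  have hex : (A *ᵥ e) ⬝ᵥ A⁻¹ *ᵥ x = x i := by
    rw [← vecMul_transpose, hsymm, ← dotProduct_mulVec, mulVec_mulVec, mul_inv_of_invertible A,
      one_mulVec, single_dotProduct, one_mul]
  have hee : (A *ᵥ e) ⬝ᵥ A⁻¹ *ᵥ (A *ᵥ e) = A i i := by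
    rw [mulVec_mulVec, inv_mul_of_invertible A, one_mulVec, ← vecMul_transpose, hsymm,
      ← dotProduct_mulVec, single_dotProduct, one_mul, mulVec_single_one]
    rfl
  have hinv_nonneg (v : n → ℝ) : 0 ≤ v ⬝ᵥ A⁻¹ *ᵥ v := by
    simpa only [star_trivial] using hA.inv.posSemidef.dotProduct_mulVec_nonneg v
  have hcs := dotProduct_mulVec_mul_dotProduct_mulVec_le hinv_nonneg (A *ᵥ e) x
  rwa [hxe, hex, hee, ← sq] at hcs

theorem PosDef.dotProduct_inv_diagonal_mulVec_le {A : Matrix n n ℝ} (hA : A.PosDef)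
    (x : n → ℝ) :
    x ⬝ᵥ (diagonal fun i => A i i)⁻¹ *ᵥ x ≤ Fintype.card n * (x ⬝ᵥ A⁻¹ *ᵥ x) := by
  rw [inv_diagonal_of_ne_zero fun i => hA.diag_pos.ne']
  simp only [dotProduct, mulVec_diagonal, Pi.inv_apply]
  calc ∑ i, x i * ((A i i)⁻¹ * x i)
      ≤ ∑ _i : n, x ⬝ᵥ A⁻¹ *ᵥ x := Finset.sum_le_sum fun i _ => by
        rw [show x i * ((A i i)⁻¹ * x i) = x i ^ 2 / A i i by ring, div_le_iff₀' hA.diag_pos]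
        exact hA.sq_le_diag_mul_dotProduct_inv_mulVec x i
    _ = Fintype.card n * (x ⬝ᵥ A⁻¹ *ᵥ x) := by simp

end Matrix

theorem diag_inv_quadratic_le_general (M : ℕ)
    (Sig : Matrix (Fin M) (Fin M) ℝ) (hSig : Sig.PosDef)
    (D : Matrix (Fin M) (Fin M) ℝ) (hD : D = Matrix.diagonal (fun i => Sig i i)) :
    (∀ x : Fin M → ℝ, x ⬝ᵥ D⁻¹ *ᵥ x ≤ (M : ℝ) * (x ⬝ᵥ Sig⁻¹ *ᵥ x)) ∧
      ((M : ℝ) • Sig⁻¹ - D⁻¹).PosSemidef := by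
  subst hD
  have hquad := hSig.dotProduct_inv_diagonal_mulVec_le
  rw [Fintype.card_fin] at hquad
  refine ⟨hquad, .of_dotProduct_mulVec_nonneg ?_ fun x => ?_⟩
  · exact (hSig.isHermitian.inv.smul (.all _)).sub (isHermitian_diagonal _).inv
  · simpa only [star_trivial, sub_mulVec, dotProduct_sub, smul_mulVec, dotProduct_smul,
      smul_eq_mul, sub_nonneg] using hquad x

/-- For a symmetric positive definite `M × M` matrix `Sig` with diagonal part `D`,
`xᵀ D⁻¹ x ≤ M · xᵀ Sig⁻¹ x` for all `x`; equivalently `M·Sig⁻¹ − D⁻¹` is positive semidefinite. -/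
theorem diag_inv_quadratic_le (M : ℕ) (hM : 1 ≤ M)
    (Sig : Matrix (Fin M) (Fin M) ℝ) (hSig : Sig.PosDef)
    (D : Matrix (Fin M) (Fin M) ℝ) (hD : D = Matrix.diagonal (fun i => Sig i i)) :
    (∀ x : Fin M → ℝ, x ⬝ᵥ D⁻¹ *ᵥ x ≤ (M : ℝ) * (x ⬝ᵥ Sig⁻¹ *ᵥ x)) ∧
      ((M : ℝ) • Sig⁻¹ - D⁻¹).PosSemidef :=
  diag_inv_quadratic_le_general M Sig hSig D hD
end

section
/- Let τ > 0, let N be a finite measure on [0, τ], let Y : [0, τ] → ℝ be a bounded measurable nonnegative function, and let λ : [0, τ] → ℝ be a measurable function with λ(t) > 0 for all t and λ integrable on [0, τ], such that t ↦ log λ(t) is N-integrable. Let a : ℝ × [0, τ] → ℝ be measurable, bounded (|a(x,t)| ≤ M for all x, t), and continuous in its first argument for each fixed t. For ε ∈ ℝ define λ_ε(t) = λ(t)·exp(∫₀^ε a(x,t) dx) and the loss ℓ(ε) = −∫ log λ_ε(t) dN(t) + ∫₀^τ Y(t) λ_ε(t) dt. Then ℓ is differentiable at every ε, with ℓ'(ε)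 = −∫ a(ε,t) dN(t) + ∫₀^τ Y(t) a(ε,t) λ_ε(t) dt. -/
open MeasureTheory

/-!
Write `g ε t = ∫₀^ε a(x,t) dx`, so that `log λ_ε = log λ + g ε` and `λ_ε = λ · exp (g ε)`. By the
fundamental theorem of calculus `∂_ε g ε t = a(ε,t)`, and `|g ε t| ≤ M |ε|`; hence on a unit ball
around `ε₀` both `a` and `Y · λ · exp (g ε) · a` are dominated by integrable functions independent of
`ε`, and both terms of the loss may be differentiated under the integral sign.
-/

theorem intervalIntegral_le_abs_mul_abs {f : ℝ → ℝ} {M : ℝ} (hf : ∀ x, |f x| ≤ M) (ε : ℝ) :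
    ∫ x in (0:ℝ)..ε, f x ≤ |M| * |ε| :=
  calc ∫ x in (0:ℝ)..ε, f x
      ≤ M * |ε - 0| := (Real.le_norm_self _).trans <|
        intervalIntegral.norm_integral_le_of_norm_le_const fun x _ =>
          (Real.norm_eq_abs _).trans_le (hf x)
    _ ≤ |M| * |ε| := by rw [sub_zero]; gcongr; exact le_abs_self M

section ParametricPrimitive

variable {α : Type*} [MeasurableSpace α] {μ : Measure α} {a : ℝ → α → ℝ} {M : ℝ}

theorem measurable_intervalIntegral_of_measurable_uncurry (ha : Measurable (Function.uncurry a))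
    (u v : ℝ) : Measurable fun t => ∫ x in u..v, a x t := by
  have hswap : StronglyMeasurable fun p : α × ℝ => a p.2 p.1 :=
    (ha.comp measurable_swap).stronglyMeasurable
  simp only [intervalIntegral.intervalIntegral_eq_integral_uIoc, smul_eq_mul]
  exact measurable_const.mul
    (hswap.integral_prod_right' (ν := volume.restrict (Set.uIoc u v))).measurable

theorem hasDerivAt_integral_add_intervalIntegral [IsFiniteMeasure μ] {h : α → ℝ}
    (hh : Integrable h μ) (ha : Measurable (Function.uncurry a)) (ha_bd : ∀ x t, |a x t| ≤ M)
    (ha_cont : ∀ t, Continuous fun x => a x t) (ε₀ : ℝ) :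
    HasDerivAt (fun ε => ∫ t, (h t + ∫ x in (0:ℝ)..ε, a x t) ∂μ) (∫ t, a ε₀ t ∂μ) ε₀ := by
  have hg_int : Integrable (fun t => ∫ x in (0:ℝ)..ε₀, a x t) μ :=
    (integrable_const (M * |ε₀ - 0|)).mono'
      (measurable_intervalIntegral_of_measurable_uncurry ha 0 ε₀).aestronglyMeasurable
      (.of_forall fun t => intervalIntegral.norm_integral_le_of_norm_le_const fun x _ => ha_bd x t)
  refine (hasDerivAt_integral_of_dominated_loc_of_deriv_le (bound := fun _ => M)
    (Metric.ball_mem_nhds ε₀ one_pos)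
    (.of_forall fun ε => (hh.aestronglyMeasurable.add
      (measurable_intervalIntegral_of_measurable_uncurry ha 0 ε).aestronglyMeasurable))
    (hh.add hg_int) (ha.comp measurable_prodMk_left).aestronglyMeasurable
    (.of_forall fun t x _ => ha_bd x t) (integrable_const M)
    (.of_forall fun t x _ => ((ha_cont t).integral_hasStrictDerivAt 0 x).hasDerivAt.const_add
      (h t))).2

theorem hasDerivAt_integral_mul_exp_intervalIntegral {w : α → ℝ} (hw : Integrable w μ)
    (ha : Measurable (Function.uncurry a)) (ha_bd : ∀ x t, |a x t| ≤ M)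
    (ha_cont : ∀ t, Continuous fun x => a x t) (ε₀ : ℝ) :
    HasDerivAt (fun ε => ∫ t, w t * Real.exp (∫ x in (0:ℝ)..ε, a x t) ∂μ)
      (∫ t, w t * a ε₀ t * Real.exp (∫ x in (0:ℝ)..ε₀, a x t) ∂μ) ε₀ := by
  set C := Real.exp (|M| * (|ε₀| + 1))
  have hexp_le : ∀ x ∈ Metric.ball ε₀ 1, ∀ t, Real.exp (∫ y in (0:ℝ)..x, a y t) ≤ C := by
    intro x hx t
    have hx' : |x| ≤ |ε₀| + 1 := by
      have := abs_sub_abs_le_abs_sub x ε₀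
      rw [Metric.mem_ball, Real.dist_eq] at hx
      linarith
    refine Real.exp_le_exp.mpr ((intervalIntegral_le_abs_mul_abs (ha_bd · t) x).trans ?_)
    gcongr
  have hexp_meas : ∀ ε, AEStronglyMeasurable (fun t => Real.exp (∫ x in (0:ℝ)..ε, a x t)) μ :=
    fun ε => (Real.measurable_exp.comp
      (measurable_intervalIntegral_of_measurable_uncurry ha 0 ε)).aestronglyMeasurable
  refine (hasDerivAt_integral_of_dominated_loc_of_deriv_le
    (F' := fun ε t => w t * a ε t * Real.exp (∫ x in (0:ℝ)..ε, a x t))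
    (bound := fun t => |w t| * (M * C)) (Metric.ball_mem_nhds ε₀ one_pos)
    (.of_forall fun ε => hw.aestronglyMeasurable.mul (hexp_meas ε))
    ?_ ((hw.aestronglyMeasurable.mul (ha.comp measurable_prodMk_left).aestronglyMeasurable).mul
      (hexp_meas ε₀))
    (.of_forall fun t x hx => ?_) (hw.abs.mul_const _)
    (.of_forall fun t x _ => ?_)).2
  · refine (hw.abs.mul_const C).mono' (hw.aestronglyMeasurable.mul (hexp_meas ε₀))
      (.of_forall fun t => ?_)
    rw [Pi.mul_apply, norm_mul, Real.norm_eq_abs, Real.norm_of_nonneg (Real.exp_pos _).le]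
    exact mul_le_mul_of_nonneg_left (hexp_le ε₀ (Metric.mem_ball_self one_pos) t) (abs_nonneg _)
  · rw [norm_mul, norm_mul, Real.norm_eq_abs, Real.norm_eq_abs,
      Real.norm_of_nonneg (Real.exp_pos _).le, mul_assoc]
    exact mul_le_mul_of_nonneg_left
      (mul_le_mul (ha_bd x t) (hexp_le x hx t) (Real.exp_pos _).le
        ((abs_nonneg _).trans (ha_bd x t))) (abs_nonneg _)
  · exact (((ha_cont t).integral_hasStrictDerivAt 0 x).hasDerivAt.exp.const_mul (w t)).congr_deriv
      (by ring)

end ParametricPrimitive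

theorem loss_hasDerivAt_along_ulfm_general (τ : ℝ)
    (N : Measure ℝ) [IsFiniteMeasure N]
    (Y : ℝ → ℝ) (hYmeas : Measurable Y) (hYnonneg : ∀ t, 0 ≤ Y t)
    (CY : ℝ) (hYbd : ∀ t, Y t ≤ CY)
    (lam : ℝ → ℝ) (hlam_pos : ∀ t, 0 < lam t)
    (hlam_int : IntegrableOn lam (Set.Icc 0 τ))
    (hlog_int : Integrable (fun t => Real.log (lam t)) N)
    (a : ℝ → ℝ → ℝ) (ha_meas : Measurable (Function.uncurry a))
    (M : ℝ) (ha_bd : ∀ x t, |a x t| ≤ M)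
    (ha_cont : ∀ t, Continuous (fun x => a x t))
    (lamε : ℝ → ℝ → ℝ)
    (hlamε : ∀ ε t, lamε ε t = lam t * Real.exp (∫ x in (0:ℝ)..ε, a x t))
    (loss : ℝ → ℝ)
    (hloss : ∀ ε, loss ε =
      -(∫ t, Real.log (lamε ε t) ∂N) + ∫ t in Set.Icc (0:ℝ) τ, Y t * lamε ε t) :
    ∀ ε : ℝ, HasDerivAt loss
      (-(∫ t, a ε t ∂N) + ∫ t in Set.Icc (0:ℝ) τ, Y t * a ε t * lamε ε t) ε := by
  intro ε₀
  have hYlam_int : IntegrableOn (fun t => Y t * lam t) (Set.Icc 0 τ) :=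
    hlam_int.bdd_mul hYmeas.aestronglyMeasurable
      (.of_forall fun t => (abs_of_nonneg (hYnonneg t)).trans_le (hYbd t))
  have hloss_eq : loss = fun ε => -(∫ t, (Real.log (lam t) + ∫ x in (0:ℝ)..ε, a x t) ∂N) +
      ∫ t in Set.Icc 0 τ, Y t * lam t * Real.exp (∫ x in (0:ℝ)..ε, a x t) := by
    ext ε
    simp only [hloss, hlamε, Real.log_mul (hlam_pos _).ne' (Real.exp_ne_zero _), Real.log_exp,
      ← mul_assoc]
  have hderiv_eq : (∫ t in Set.Icc (0:ℝ) τ, Y t * a ε₀ t * lamε ε₀ t) =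
      ∫ t in Set.Icc 0 τ, Y t * lam t * a ε₀ t * Real.exp (∫ x in (0:ℝ)..ε₀, a x t) := by
    simp only [hlamε]
    congr 1 with t
    ring
  rw [hloss_eq, hderiv_eq]
  exact (hasDerivAt_integral_add_intervalIntegral hlog_int ha_meas ha_bd ha_cont ε₀).neg.add
    (hasDerivAt_integral_mul_exp_intervalIntegral hYlam_int ha_meas ha_bd ha_cont ε₀)

/-- Differentiability of the negative log-likelihood loss along the universal
least favorable submodel `λ_ε(t) = λ(t)·exp(∫₀^ε a(x,t) dx)`, with derivative
`ℓ'(ε) = −∫ a(ε,t) dN(t) + ∫₀^τ Y(t) a(ε,t) λ_ε(t) dt`. -/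
theorem loss_hasDerivAt_along_ulfm (τ : ℝ) (hτ : 0 < τ)
    (N : Measure ℝ) [IsFiniteMeasure N] (hNsupp : N (Set.Icc 0 τ)ᶜ = 0)
    (Y : ℝ → ℝ) (hYmeas : Measurable Y) (hYnonneg : ∀ t, 0 ≤ Y t)
    (CY : ℝ) (hYbd : ∀ t, Y t ≤ CY)
    (lam : ℝ → ℝ) (hlam_meas : Measurable lam) (hlam_pos : ∀ t, 0 < lam t)
    (hlam_int : IntegrableOn lam (Set.Icc 0 τ))
    (hlog_int : Integrable (fun t => Real.log (lam t)) N)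
    (a : ℝ → ℝ → ℝ) (ha_meas : Measurable (Function.uncurry a))
    (M : ℝ) (ha_bd : ∀ x t, |a x t| ≤ M)
    (ha_cont : ∀ t, Continuous (fun x => a x t))
    (lamε : ℝ → ℝ → ℝ)
    (hlamε : ∀ ε t, lamε ε t = lam t * Real.exp (∫ x in (0:ℝ)..ε, a x t))
    (loss : ℝ → ℝ)
    (hloss : ∀ ε, loss ε =
      -(∫ t, Real.log (lamε ε t) ∂N) + ∫ t in Set.Icc (0:ℝ) τ, Y t * lamε ε t) :
    ∀ ε : ℝ, HasDerivAt loss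
      (-(∫ t, a ε t ∂N) + ∫ t in Set.Icc (0:ℝ) τ, Y t * a ε t * lamε ε t) ε :=
  loss_hasDerivAt_along_ulfm_general τ N Y hYmeas hYnonneg CY hYbd lam hlam_pos hlam_int hlog_int a
    ha_meas M ha_bd ha_cont lamε hlamε loss hloss
end

section
/- Let (X, μ) be a probability space, τ > 0, and let κ' ∈ (0,1], η > 0, K' > 0. Let F : [0,τ] × X → ℝ be measurable with 0 ≤ F(t,x) ≤ 1 for all (t,x) and t ↦ F(t,x) nondecreasing for each x; let S : [0,τ] × X → ℝ be measurable with S(s,x) ≥ κ' for all (s,x); and let g : [0,τ] × X → ℝ be measurable with 0 ≤ g(s,x) ≤ η for all (s,x). For t ∈ [0,τ] define h_t(s,x) = g(s,x) · 𝟙{s ≤ t} · (1 − (F(t,x) − F(s,x))/S(s,x)). Fix 0 ≤ t ≤ t' ≤ τ and assume the Lipschitz-type condition (∫_X (F(t',x) − F(t,x))² dμ(x))^{1/2} ≤ K'·(t' − t)^{1/2}. Then ( ∫_X ∫_0^τ (h_{t'}(s,x) − h_t(s,x))² ds dμ(x) )^{1/2} ≤ η·(1 + (2 + K'·√τ)/κ')·(t'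 − t)^{1/2}. -/
/-!
On `s ≤ t` the two index functions differ only through `F t' − F t`, which is divided by
`S ≥ κ'`; on `t < s ≤ t'` only `h_{t'}` is nonzero, and it is bounded by `η (1 + 1/κ')`;
beyond `t'` both vanish. Hence the squared difference is at most
`(η/κ')² (F t' − F t)² + 𝟙_{(t,t']} η² (1 + 1/κ')²`, whose `μ ⊗ Lebesgue` integral is
`τ (η/κ')² ‖F t' − F t‖²_{L²(μ)} + (t' − t) η² (1 + 1/κ')²`; the Lipschitz condition and
`√(a + b) ≤ √a + √b` conclude.
-/

open MeasureTheory Set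

/-- The index function `h_t(s, x)` of the paper. -/
noncomputable def indexFun {X : Type*} (g F S : ℝ → X → ℝ) (t s : ℝ) (x : X) : ℝ :=
  g s x * (if s ≤ t then (1 : ℝ) else 0) * (1 - (F t x - F s x) / S s x)

lemma sq_mul_div_le_sq {a d σ κ η : ℝ} (hκ : 0 < κ) (hσ : κ ≤ σ) (ha : |a| ≤ η) :
    (a * (d / σ)) ^ 2 ≤ (η * d / κ) ^ 2 := by
  have hη : 0 ≤ η := (abs_nonneg a).trans ha
  rw [sq_le_sq, abs_mul, abs_div, mul_div_assoc, abs_mul, abs_div, abs_of_nonneg hη,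
    abs_of_pos hκ, abs_of_pos (hκ.trans_le hσ)]
  gcongr
  exact div_nonneg (abs_nonneg d) (hκ.le.trans hσ)

lemma sq_mul_one_sub_div_le_sq {a d σ κ η : ℝ} (hκ : 0 < κ) (hσ : κ ≤ σ) (ha : |a| ≤ η)
    (hd : |d| ≤ 1) : (a * (1 - d / σ)) ^ 2 ≤ (η * (1 + 1 / κ)) ^ 2 := by
  have hη : 0 ≤ η := (abs_nonneg a).trans ha
  have hdσ : |d / σ| ≤ 1 / κ := by
    rw [abs_div, abs_of_pos (hκ.trans_le hσ)]
    gcongr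
  rw [sq_le_sq, abs_mul, abs_of_nonneg (by positivity : 0 ≤ η * (1 + 1 / κ))]
  gcongr
  exact (abs_sub _ _).trans (by rw [abs_one]; gcongr)

lemma sq_indexFun_sub_le {X : Type*} {g F S : ℝ → X → ℝ} {κ η t t' s : ℝ} {x : X}
    (htt' : t ≤ t') (hκ : 0 < κ) (hS : κ ≤ S s x) (hg : |g s x| ≤ η) (hF : |F t' x - F s x| ≤ 1) :
    (indexFun g F S t' s x - indexFun g F S t s x) ^ 2 ≤
      (η * (F t' x - F t x) / κ) ^ 2 +
        (Ioc t t').indicator (fun _ => (η * (1 + 1 / κ)) ^ 2) s := by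
  have hind0 : 0 ≤ (Ioc t t').indicator (fun _ => (η * (1 + 1 / κ)) ^ 2) s :=
    indicator_nonneg (fun _ _ => sq_nonneg _) s
  simp only [indexFun]
  rcases le_or_gt s t with hst | hts
  · have hdiff : g s x * (if s ≤ t' then (1 : ℝ) else 0) * (1 - (F t' x - F s x) / S s x) -
        g s x * (if s ≤ t then (1 : ℝ) else 0) * (1 - (F t x - F s x) / S s x) =
        -(g s x * ((F t' x - F t x) / S s x)) := by
      rw [if_pos (hst.trans htt'), if_pos hst]
      ring
    rw [hdiff, neg_sq]
    exact (sq_mul_div_le_sq hκ hS hg).trans (le_add_of_nonneg_right hind0)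
  rcases le_or_gt s t' with hst' | hts'
  · rw [if_pos hst', if_neg hts.not_ge,
      indicator_of_mem (show s ∈ Ioc t t' from ⟨hts, hst'⟩)]
    simp only [mul_one, mul_zero, zero_mul, sub_zero]
    exact (sq_mul_one_sub_div_le_sq hκ hS hg hF).trans (le_add_of_nonneg_left (sq_nonneg _))
  · rw [if_neg hts'.not_ge, if_neg hts.not_ge]
    simpa using add_nonneg (sq_nonneg (η * (F t' x - F t x) / κ)) hind0

lemma setIntegral_Ioc_le_of_le_add_indicator {f : ℝ → ℝ} {a b c d A B : ℝ} (hab : a ≤ b)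
    (hcd : c ≤ d) (hB : 0 ≤ B) (hf0 : ∀ s ∈ Ioc a b, 0 ≤ f s)
    (hf : ∀ s ∈ Ioc a b, f s ≤ A + (Ioc c d).indicator (fun _ => B) s) :
    ∫ s in Ioc a b, f s ≤ (b - a) * A + (d - c) * B := by
  have hind : Integrable ((Ioc c d).indicator fun _ => B) :=
    (integrable_indicator_iff measurableSet_Ioc).2 (integrableOn_const measure_Ioc_lt_top.ne)
  have hind0 : 0 ≤ᵐ[volume] (Ioc c d).indicator fun _ => B :=
    .of_forall (indicator_nonneg fun _ _ => hB)
  calc ∫ s in Ioc a b, f s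
      ≤ ∫ s in Ioc a b, (A + (Ioc c d).indicator (fun _ => B) s) :=
        integral_mono_of_nonneg (ae_restrict_of_forall_mem measurableSet_Ioc hf0)
          ((integrable_const A).add hind.integrableOn)
          (ae_restrict_of_forall_mem measurableSet_Ioc hf)
    _ = (b - a) * A + ∫ s in Ioc a b, (Ioc c d).indicator (fun _ => B) s := by
        rw [integral_add (integrable_const A) hind.integrableOn, setIntegral_const,
          Real.volume_real_Ioc_of_le hab, smul_eq_mul]
    _ ≤ (b - a) * A + ∫ s, (Ioc c d).indicator (fun _ => B) s :=
        (add_le_add_iff_left _).2 (setIntegral_le_integral hind hind0)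
    _ = (b - a) * A + (d - c) * B := by
        rw [integral_indicator_const B measurableSet_Ioc, Real.volume_real_Ioc_of_le hcd,
          smul_eq_mul]

lemma integral_le_mul_integral_add_of_le {X : Type*} [MeasurableSpace X] {μ : Measure X}
    [IsProbabilityMeasure μ] {f q : X → ℝ} {c e : ℝ} (hq : Integrable q μ)
    (hf0 : ∀ x, 0 ≤ f x) (hf : ∀ x, f x ≤ c * q x + e) :
    ∫ x, f x ∂μ ≤ c * ∫ x, q x ∂μ + e := by
  calc ∫ x, f x ∂μ ≤ ∫ x, (c * q x + e) ∂μ :=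
        integral_mono_of_nonneg (.of_forall hf0) ((hq.const_mul c).add (integrable_const e))
          (.of_forall hf)
    _ = c * ∫ x, q x ∂μ + e := by
        rw [integral_add (hq.const_mul c) (integrable_const e), integral_const_mul,
          integral_const, probReal_univ, one_smul]

lemma sqrt_mul_sq_mul_add_mul_sq_le {τ a J δ C : ℝ} (hτ : 0 ≤ τ) (ha : 0 ≤ a) (hJ : 0 ≤ J)
    (hδ : 0 ≤ δ) (hC : 0 ≤ C) :
    √(τ * a ^ 2 * J + δ * C ^ 2) ≤ √τ * a * √J + C * √δ := by
  rw [Real.sqrt_le_iff]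
  refine ⟨by positivity, ?_⟩
  have hcross : 0 ≤ √τ * a * √J * (C * √δ) := by positivity
  have hfirst : (√τ * a * √J) ^ 2 = τ * a ^ 2 * J := by
    rw [mul_pow, mul_pow, Real.sq_sqrt hτ, Real.sq_sqrt hJ]
  have hsecond : (C * √δ) ^ 2 = δ * C ^ 2 := by rw [mul_pow, Real.sq_sqrt hδ, mul_comm]
  nlinarith [hfirst, hsecond, hcross]

theorem index_function_L2_bound_case_one_general {X : Type*} [MeasurableSpace X]
    (μ : Measure X) [IsProbabilityMeasure μ]
    (τ : ℝ) (hτ : 0 < τ) (κ' : ℝ) (hκ : 0 < κ' ∧ κ' ≤ 1) (η : ℝ) (hη : 0 < η)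
    (K' : ℝ)
    (F : ℝ → X → ℝ) (hFmeas : Measurable (Function.uncurry F))
    (hF01 : ∀ t x, t ∈ Set.Icc 0 τ → 0 ≤ F t x ∧ F t x ≤ 1)
    (S : ℝ → X → ℝ)
    (hSlb : ∀ s x, s ∈ Set.Icc 0 τ → κ' ≤ S s x)
    (g : ℝ → X → ℝ)
    (hg : ∀ s x, s ∈ Set.Icc 0 τ → 0 ≤ g s x ∧ g s x ≤ η)
    (h : ℝ → ℝ → X → ℝ)
    (hdef : ∀ t s x, h t s x =
      g s x * (if s ≤ t then (1:ℝ) else 0) * (1 - (F t x - F s x) / S s x))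
    (t t' : ℝ) (ht : 0 ≤ t) (htt' : t ≤ t') (ht' : t' ≤ τ)
    (hLip : Real.sqrt (∫ x, (F t' x - F t x) ^ 2 ∂μ) ≤ K' * Real.sqrt (t' - t)) :
    Real.sqrt (∫ x, (∫ s in Set.Ioc (0:ℝ) τ, (h t' s x - h t s x) ^ 2) ∂μ) ≤
      η * (1 + (2 + K' * Real.sqrt τ) / κ') * Real.sqrt (t' - t) := by
  obtain rfl : h = indexFun g F S := by funext t s x; exact hdef t s x
  have htI : t ∈ Icc 0 τ := ⟨ht, htt'.trans ht'⟩
  have ht'I : t' ∈ Icc 0 τ := ⟨ht.trans htt', ht'⟩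
  have hF_sub : ∀ s x, s ∈ Icc 0 τ → |F t' x - F s x| ≤ 1 := fun s x hs =>
    abs_sub_le_of_nonneg_of_le (hF01 t' x ht'I).1 (hF01 t' x ht'I).2
      (hF01 s x hs).1 (hF01 s x hs).2
  have hinner : ∀ x, ∫ s in Ioc 0 τ, (indexFun g F S t' s x - indexFun g F S t s x) ^ 2 ≤
      τ * (η / κ') ^ 2 * (F t' x - F t x) ^ 2 + (t' - t) * (η * (1 + 1 / κ')) ^ 2 := by
    intro x
    refine (setIntegral_Ioc_le_of_le_add_indicator (A := (η * (F t' x - F t x) / κ') ^ 2)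
      hτ.le htt' (sq_nonneg (η * (1 + 1 / κ')))
      (fun s _ => sq_nonneg _) fun s hs => ?_).trans_eq (by ring)
    have hsI : s ∈ Icc 0 τ := Ioc_subset_Icc_self hs
    exact sq_indexFun_sub_le htt' hκ.1 (hSlb s x hsI)
      ((abs_of_nonneg (hg s x hsI).1).trans_le (hg s x hsI).2) (hF_sub s x hsI)
  have hD2 : Integrable (fun x => (F t' x - F t x) ^ 2) μ := by
    refine .of_bound (by fun_prop) 1 (.of_forall fun x => ?_)
    rw [Real.norm_eq_abs, abs_pow, pow_le_one_iff_of_nonneg (abs_nonneg _) two_ne_zero]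
    exact hF_sub t x htI
  have hηκ : 0 ≤ η / κ' := (div_pos hη hκ.1).le
  have hC : 0 ≤ η * (1 + 1 / κ') :=
    mul_nonneg hη.le (add_nonneg zero_le_one (one_div_pos.2 hκ.1).le)
  calc √(∫ x, (∫ s in Ioc 0 τ, (indexFun g F S t' s x - indexFun g F S t s x) ^ 2) ∂μ)
      ≤ √(τ * (η / κ') ^ 2 * ∫ x, (F t' x - F t x) ^ 2 ∂μ +
          (t' - t) * (η * (1 + 1 / κ')) ^ 2) :=
        Real.sqrt_le_sqrt (integral_le_mul_integral_add_of_le hD2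
          (fun x => setIntegral_nonneg measurableSet_Ioc fun s _ => sq_nonneg _) hinner)
    _ ≤ √τ * (η / κ') * √(∫ x, (F t' x - F t x) ^ 2 ∂μ) + η * (1 + 1 / κ') * √(t' - t) :=
        sqrt_mul_sq_mul_add_mul_sq_le hτ.le hηκ (integral_nonneg fun x => sq_nonneg _)
          (sub_nonneg.2 htt') hC
    _ ≤ √τ * (η / κ') * (K' * √(t' - t)) + η * (1 + 1 / κ') * √(t' - t) := by
        gcongr
    _ = η * (1 + (1 + K' * √τ) / κ') * √(t' - t) := by ring
    _ ≤ η * (1 + (2 + K' * √τ) / κ') * √(t' - t) := by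
        gcongr
        · exact hκ.1.le
        · exact one_le_two

/-- Verification of Assumption A2 (case l = 1): under the Lipschitz-type
condition on the absolute risk `F`, the `L²(μ ⊗ Lebesgue)` distance between the index
functions `h_{t'}` and `h_t` is of order `(t' − t)^{1/2}`. -/
theorem index_function_L2_bound_case_one {X : Type*} [MeasurableSpace X]
    (μ : Measure X) [IsProbabilityMeasure μ]
    (τ : ℝ) (hτ : 0 < τ) (κ' : ℝ) (hκ : 0 < κ' ∧ κ' ≤ 1) (η : ℝ) (hη : 0 < η)
    (K' : ℝ) (hK' : 0 < K')
    (F : ℝ → X → ℝ) (hFmeas : Measurable (Function.uncurry F))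
    (hF01 : ∀ t x, t ∈ Set.Icc 0 τ → 0 ≤ F t x ∧ F t x ≤ 1)
    (hFmono : ∀ x, MonotoneOn (fun t => F t x) (Set.Icc 0 τ))
    (S : ℝ → X → ℝ) (hSmeas : Measurable (Function.uncurry S))
    (hSlb : ∀ s x, s ∈ Set.Icc 0 τ → κ' ≤ S s x)
    (g : ℝ → X → ℝ) (hgmeas : Measurable (Function.uncurry g))
    (hg : ∀ s x, s ∈ Set.Icc 0 τ → 0 ≤ g s x ∧ g s x ≤ η)
    (h : ℝ → ℝ → X → ℝ)
    (hdef : ∀ t s x, h t s x =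
      g s x * (if s ≤ t then (1:ℝ) else 0) * (1 - (F t x - F s x) / S s x))
    (t t' : ℝ) (ht : 0 ≤ t) (htt' : t ≤ t') (ht' : t' ≤ τ)
    (hLip : Real.sqrt (∫ x, (F t' x - F t x) ^ 2 ∂μ) ≤ K' * Real.sqrt (t' - t)) :
    Real.sqrt (∫ x, (∫ s in Set.Ioc (0:ℝ) τ, (h t' s x - h t s x) ^ 2) ∂μ) ≤
      η * (1 + (2 + K' * Real.sqrt τ) / κ') * Real.sqrt (t' - t) :=
  index_function_L2_bound_case_one_general μ τ hτ κ' hκ η hη K' F hFmeas hF01 S hSlb g hg h hdef t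
    t' ht htt' ht' hLip
end
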